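/- For any finite set S ⊆ ℝ^n, the n-th iterated segment-join conv^n(S) equals the convex hull conv(S). -/
import Mathlib


open Set

/-- The union of all line segments with endpoints in `A`. -/
def segJoin {E : Type*} [AddCommGroup E] [Module ℝ E] (A : Set E) : Set E :=
  ⋃ a ∈ A, ⋃ b ∈ A, segment ℝ a b

/-- The iterated segment-join `convⁱ(A)`. -/
def segJoinIter {E : Type*} [AddCommGroup E] [Module ℝ E] : ℕ → Set E → Set E
  | 0, A => A
  | (i+1), A => segJoin (segJoinIter i A)

section aux

variable {E : Type*} [AddCommGroup E] [Module ℝ E]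

lemma subset_segJoin (A : Set E) : A ⊆ segJoin A := fun x hx => by
  simp only [segJoin, mem_iUnion]
  exact ⟨x, hx, x, hx, left_mem_segment ℝ x x⟩

lemma segJoin_mono {A B : Set E} (h : A ⊆ B) : segJoin A ⊆ segJoin B := by
  intro x hx
  simp only [segJoin, mem_iUnion] at hx ⊢
  obtain ⟨a, ha, b, hb, hab⟩ := hx
  exact ⟨a, h ha, b, h hb, hab⟩

lemma segJoinIter_mono {A B : Set E} (h : A ⊆ B) (i : ℕ) :
    segJoinIter i A ⊆ segJoinIter i B := by
  induction i with
  | zero => exact h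
  | succ i ih => exact segJoin_mono ih

lemma subset_segJoinIter (A : Set E) (i : ℕ) : A ⊆ segJoinIter i A := by
  induction i with
  | zero => exact subset_rfl
  | succ i ih => exact ih.trans (subset_segJoin _)

lemma segJoinIter_subset_succ (A : Set E) (i : ℕ) :
    segJoinIter i A ⊆ segJoinIter (i + 1) A := subset_segJoin _

lemma segJoin_subset_of_convex {A C : Set E} (hC : Convex ℝ C) (h : A ⊆ C) :
    segJoin A ⊆ C := by
  intro x hx
  simp only [segJoin, mem_iUnion] at hx
  obtain ⟨a, ha, b, hb, hab⟩ := hx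
  exact hC.segment_subset (h ha) (h hb) hab

lemma segJoinIter_subset_convexHull (A : Set E) (i : ℕ) :
    segJoinIter i A ⊆ convexHull ℝ A := by
  induction i with
  | zero => exact subset_convexHull ℝ A
  | succ i ih => exact segJoin_subset_of_convex (convex_convexHull ℝ A) ih

lemma convexHull_finset_subset_segJoinIter :
    ∀ (i : ℕ) (t : Finset E), t.card ≤ i + 1 →
      convexHull ℝ (t : Set E) ⊆ segJoinIter i (t : Set E) := by
  intro i
  induction i with
  | zero =>
    intro t ht
    interval_cases h : t.card
    · simp [Finset.card_eq_zero.mp h]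
    · obtain ⟨a, rfl⟩ := Finset.card_eq_one.mp h
      simp [segJoinIter]
  | succ i ih =>
    intro t ht
    classical
    rcases Nat.lt_or_ge t.card (i + 2) with hlt | hge
    · exact (ih t (Nat.lt_succ_iff.mp hlt)).trans
        (segJoinIter_mono subset_rfl i |>.trans (segJoinIter_subset_succ _ i))
    · have hcard : t.card = i + 2 := le_antisymm ht hge
      have htne : t.Nonempty := Finset.card_pos.mp (by omega)
      obtain ⟨a, ha⟩ := htne
      set s := t.erase a with hs
      have hscard : s.card = i + 1 := by
        rw [hs, Finset.card_erase_of_mem ha]; omega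
      have hsne : (s : Set E).Nonempty := by
        rw [Finset.coe_nonempty]
        exact Finset.card_pos.mp (by omega)
      have hins : insert a (s : Set E) = (t : Set E) := by
        rw [hs, Finset.coe_erase]
        exact Set.insert_diff_singleton.trans (Set.insert_eq_of_mem (Finset.mem_coe.mpr ha))
      intro x hx
      rw [← hins, convexHull_insert hsne, mem_convexJoin] at hx
      obtain ⟨p, hp, q, hq, hx⟩ := hx
      rw [mem_singleton_iff] at hp
      have hq' : q ∈ segJoinIter i (t : Set E) :=
        segJoinIter_mono (by rw [hs]; exact_mod_cast Finset.erase_subset a t)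
          i (ih s (by omega) hq)
      have ha' : a ∈ segJoinIter i (t : Set E) := subset_segJoinIter _ i ha
      show x ∈ segJoin (segJoinIter i (t : Set E))
      simp only [segJoin, mem_iUnion]
      exact ⟨a, ha', q, hq', hp ▸ hx⟩

end aux

/-- Lemma `FinRn`. For any finite set `S ⊆ ℝⁿ`,
`convⁿ(S) = conv(S)`. -/
theorem segJoinIter_eq_convexHull_of_finite (n : ℕ)
    (S : Set (EuclideanSpace ℝ (Fin n))) (hS : S.Finite) :
    segJoinIter n S = convexHull ℝ S := by
  refine subset_antisymm (segJoinIter_subset_convexHull S n) ?_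
  rw [convexHull_eq_union]
  refine iUnion_subset fun t => iUnion_subset fun hts => iUnion_subset fun hai => ?_
  have hcard : t.card ≤ n + 1 := by
    have h1 := hai.card_le_finrank_succ
    have h2 : Module.finrank ℝ (vectorSpan ℝ (Set.range ((↑) : t → EuclideanSpace ℝ (Fin n))))
        ≤ n := by
      have := Submodule.finrank_le (vectorSpan ℝ (Set.range ((↑) : t → EuclideanSpace ℝ (Fin n))))
      simpa [finrank_euclideanSpace_fin] using this
    have h3 : Fintype.card t = t.card := Fintype.card_coe t
    omega
  exact (convexHull_finset_subset_segJoinIter n t hcard).trans (segJoinIter_mono hts n)
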